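/- arXiv:1808.02551 — 5 statements merged into one kernel-verified Lean document; each statement's English description precedes it below -/
import Mathlib

section
/- Let (X_n)_{n≥1} be a monotone (nondecreasing or nonincreasing) sequence of nonnegative random variables on a probability space. Then almost surely limsup_{n→∞} log X_n / log n ≤ limsup_{n→∞} log E[X_n] / log n. -/
/-!
If `E[X_n] ≤ n ^ a` eventually and `a < b`, Markov's inequality bounds `P(X_{2^k} ≥ 2^{kb})` by
`2^{k(a-b)}`, which is summable, so by Borel–Cantelli almost surely `X_{2^k} < 2^{kb}` for all
large `k`. By monotonicity, `X_n` for `2^k ≤ n < 2^{k+1}` is bounded by its value at `2^k` or at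
`2^{k+1}`, whence `X_n ≤ n ^ q` eventually for every `q > b`. Letting `q` run through the
rationals above `limsup log E[X_n] / log n` gives the claim almost surely.
-/

open Filter MeasureTheory
open scoped ENNReal

noncomputable def polyGrowthSup (u : ℕ → ℝ≥0∞) : EReal :=
  limsup (fun n : ℕ => ENNReal.log (u n) * (((Real.log n)⁻¹ : ℝ) : EReal)) atTop

lemma ENNReal.log_natCast_rpow {n : ℕ} (hn : n ≠ 0) (a : ℝ) :
    ENNReal.log ((n : ℝ≥0∞) ^ a) = ((a * Real.log n : ℝ) : EReal) := by
  rw [ENNReal.log_rpow, ← ENNReal.ofReal_natCast,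
    ENNReal.log_ofReal_of_pos (Nat.cast_pos.2 (Nat.pos_of_ne_zero hn)), EReal.coe_mul]

lemma log_mul_inv_log_le_iff {x : ℝ≥0∞} {n : ℕ} (hn : 2 ≤ n) {a : ℝ} :
    ENNReal.log x * (((Real.log n)⁻¹ : ℝ) : EReal) ≤ a ↔ x ≤ (n : ℝ≥0∞) ^ a := by
  have hlog : 0 < Real.log n := Real.log_pos (by exact_mod_cast hn)
  rw [← ENNReal.log_le_log_iff, ENNReal.log_natCast_rpow (by omega), EReal.coe_inv,
    ← div_eq_mul_inv, EReal.div_le_iff_le_mul (by exact_mod_cast hlog) (EReal.coe_ne_top _),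
    mul_comm, EReal.coe_mul]

lemma EReal.le_of_forall_rat_lt_imp_le {x y : EReal}
    (h : ∀ q : ℚ, y < (q : ℝ) → x ≤ (q : ℝ)) : x ≤ y := by
  refine le_of_forall_gt_imp_ge_of_dense fun z hyz => ?_
  obtain ⟨q, hyq, hqz⟩ := EReal.exists_rat_btwn_of_lt hyz
  exact (h q hyq).trans hqz.le

lemma Filter.Eventually.polyGrowthSup_le {u : ℕ → ℝ≥0∞} {a : ℝ}
    (h : ∀ᶠ n in atTop, u n ≤ (n : ℝ≥0∞) ^ a) : polyGrowthSup u ≤ a :=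
  limsup_le_of_le (by isBoundedDefault) <| by
    filter_upwards [h, eventually_ge_atTop 2] with n hn h2
    exact (log_mul_inv_log_le_iff h2).2 hn

lemma eventually_le_rpow_of_polyGrowthSup_lt {u : ℕ → ℝ≥0∞} {a : ℝ} (h : polyGrowthSup u < a) :
    ∀ᶠ n in atTop, u n ≤ (n : ℝ≥0∞) ^ a := by
  filter_upwards [eventually_lt_of_limsup_lt h, eventually_ge_atTop 2] with n hn h2
  exact (log_mul_inv_log_le_iff h2).1 hn.le

lemma eventually_natCast_rpow_le_rpow {b q : ℝ} (hbq : b < q) :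
    ∀ᶠ n : ℕ in atTop, ∀ m : ℕ, n ≤ 2 * m → m ≤ 2 * n → (m : ℝ≥0∞) ^ b ≤ (n : ℝ≥0∞) ^ q := by
  have hlog : Tendsto (fun n : ℕ => Real.log n) atTop atTop :=
    Real.tendsto_log_atTop.comp tendsto_natCast_atTop_atTop
  filter_upwards [hlog.eventually_ge_atTop (|b| * Real.log 2 / (q - b)),
    eventually_ne_atTop 0] with n hn hn0 m hnm hmn
  have hm0 : m ≠ 0 := by omega
  have hdist : |Real.log m - Real.log n| ≤ Real.log 2 := by
    have hm : (0 : ℝ) < m := by positivity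
    have hn : (0 : ℝ) < n := by positivity
    refine abs_sub_le_iff.2 ⟨?_, ?_⟩ <;>
      rw [sub_le_iff_le_add, ← Real.log_mul two_ne_zero (by positivity)]
    · exact Real.log_le_log hm (by exact_mod_cast hmn)
    · exact Real.log_le_log hn (by exact_mod_cast hnm)
  have key : b * Real.log m ≤ q * Real.log n := by
    have h1 : b * (Real.log m - Real.log n) ≤ |b| * Real.log 2 :=
      (le_abs_self _).trans (by rw [abs_mul]; exact mul_le_mul_of_nonneg_left hdist (abs_nonneg b))
    have h2 : |b| * Real.log 2 ≤ (q - b) * Real.log n := (div_le_iff₀' (sub_pos.2 hbq)).1 hn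
    linarith
  rw [← ENNReal.log_le_log_iff, ENNReal.log_natCast_rpow hm0, ENNReal.log_natCast_rpow hn0]
  exact_mod_cast key

lemma eventually_le_rpow_of_eventually_le_two_pow_rpow {u : ℕ → ℝ≥0∞}
    (hu : Monotone u ∨ Antitone u) {b q : ℝ} (hbq : b < q)
    (h : ∀ᶠ k in atTop, u (2 ^ k) ≤ ((2 ^ k : ℕ) : ℝ≥0∞) ^ b) :
    ∀ᶠ n in atTop, u n ≤ (n : ℝ≥0∞) ^ q := by
  have hlog : Tendsto (Nat.log 2) atTop atTop :=
    tendsto_atTop_atTop.2 fun k => ⟨2 ^ k, fun n hn => Nat.le_log_of_pow_le one_lt_two hn⟩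
  filter_upwards [hlog.eventually h, hlog.eventually ((tendsto_add_atTop_nat 1).eventually h),
    eventually_natCast_rpow_le_rpow hbq, eventually_ne_atTop 0] with n hlo hhi hpow hn
  have h_lo : 2 ^ Nat.log 2 n ≤ n := Nat.pow_log_le_self 2 hn
  have h_hi : n < 2 ^ (Nat.log 2 n + 1) := Nat.lt_pow_succ_log_self one_lt_two n
  have h_succ : 2 ^ (Nat.log 2 n + 1) = 2 * 2 ^ Nat.log 2 n := pow_succ' 2 _
  rcases hu with hu | hu
  · exact (hu h_hi.le).trans <| hhi.trans <| hpow _ (by omega) (by omega)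
  · exact (hu h_lo).trans <| hlo.trans <| hpow _ (by omega) (by omega)

section

variable {Ω : Type*} [MeasurableSpace Ω] {μ : Measure Ω}

lemma ae_eventually_lt_of_lintegral_div_le {f : ℕ → Ω → ℝ≥0∞} (hf : ∀ k, AEMeasurable (f k) μ)
    {ε g : ℕ → ℝ≥0∞} (hε₀ : ∀ k, ε k ≠ 0) (hε : ∀ k, ε k ≠ ∞) (hg : ∑' k, g k ≠ ∞)
    (h : ∀ᶠ k in atTop, (∫⁻ ω, f k ω ∂μ) / ε k ≤ g k) :
    ∀ᵐ ω ∂μ, ∀ᶠ k in atTop, f k ω < ε k := by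
  obtain ⟨K, hK⟩ := eventually_atTop.1 h
  have hsum : ∑' k, μ {ω | ε (k + K) ≤ f (k + K) ω} ≠ ∞ := by
    refine ne_top_of_le_ne_top
      (ne_top_of_le_ne_top hg (ENNReal.tsum_comp_le_tsum_of_injective (add_left_injective K) g))
      (ENNReal.tsum_le_tsum fun k => ?_)
    exact (meas_ge_le_lintegral_div (hf _) (hε₀ _) (hε _)).trans (hK _ (Nat.le_add_left K k))
  filter_upwards [ae_eventually_notMem hsum] with ω hω
  filter_upwards [(tendsto_sub_atTop_nat K).eventually hω, eventually_ge_atTop K] with k hk hKk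
  rw [Nat.sub_add_cancel hKk] at hk
  exact not_le.1 hk

lemma ae_polyGrowthSup_le_of_polyGrowthSup_lintegral_lt {f : ℕ → Ω → ℝ≥0∞}
    (hf : ∀ n, AEMeasurable (f n) μ) (hmono : ∀ ω, Monotone (f · ω) ∨ Antitone (f · ω)) {q : ℝ}
    (hq : polyGrowthSup (fun n => ∫⁻ ω, f n ω ∂μ) < q) :
    ∀ᵐ ω ∂μ, polyGrowthSup (f · ω) ≤ q := by
  obtain ⟨a, hEa, haq⟩ := EReal.lt_iff_exists_real_btwn.1 hq
  obtain ⟨b, hab, hbq⟩ := exists_between (EReal.coe_lt_coe_iff.1 haq)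
  have hdyadic : ∀ᶠ k in atTop,
      (∫⁻ ω, f (2 ^ k) ω ∂μ) / ((2 ^ k : ℕ) : ℝ≥0∞) ^ b ≤ ((2 : ℝ≥0∞) ^ (a - b)) ^ k := by
    filter_upwards [(tendsto_pow_atTop_atTop_of_one_lt one_lt_two).eventually
      (eventually_le_rpow_of_polyGrowthSup_lt hEa)] with k hk
    calc (∫⁻ ω, f (2 ^ k) ω ∂μ) / ((2 ^ k : ℕ) : ℝ≥0∞) ^ b
        ≤ ((2 ^ k : ℕ) : ℝ≥0∞) ^ a / ((2 ^ k : ℕ) : ℝ≥0∞) ^ b := ENNReal.div_le_div_right hk _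
      _ = ((2 ^ k : ℕ) : ℝ≥0∞) ^ (a - b) := (ENNReal.rpow_sub _ _ (by simp) (by simp)).symm
      _ = ((2 : ℝ≥0∞) ^ (a - b)) ^ k := by
        rw [Nat.cast_pow, ← ENNReal.rpow_natCast, ← ENNReal.rpow_mul, ← ENNReal.rpow_natCast,
          ← ENNReal.rpow_mul, mul_comm, Nat.cast_ofNat]
  have hgeom : ∑' k, ((2 : ℝ≥0∞) ^ (a - b)) ^ k ≠ ∞ := by
    rw [ENNReal.tsum_geometric, ENNReal.inv_ne_top]
    exact ne_of_gt <| tsub_pos_of_lt <|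
      ENNReal.rpow_lt_one_of_one_lt_of_neg ENNReal.one_lt_two (by linarith)
  filter_upwards [ae_eventually_lt_of_lintegral_div_le (fun k => hf (2 ^ k)) (fun k => by simp)
    (fun k => by simp) hgeom hdyadic] with ω hω
  exact (eventually_le_rpow_of_eventually_le_two_pow_rpow (hmono ω) hbq
    (hω.mono fun _ => le_of_lt)).polyGrowthSup_le

theorem ae_polyGrowthSup_le_polyGrowthSup_lintegral {f : ℕ → Ω → ℝ≥0∞}
    (hf : ∀ n, AEMeasurable (f n) μ) (hmono : ∀ ω, Monotone (f · ω) ∨ Antitone (f · ω)) :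
    ∀ᵐ ω ∂μ, polyGrowthSup (f · ω) ≤ polyGrowthSup (fun n => ∫⁻ ω, f n ω ∂μ) := by
  have h : ∀ᵐ ω ∂μ, ∀ q : ℚ, polyGrowthSup (fun n => ∫⁻ ω, f n ω ∂μ) < (q : ℝ) →
      polyGrowthSup (f · ω) ≤ (q : ℝ) :=
    ae_all_iff.2 fun q => eventually_imp_distrib_left.2
      (ae_polyGrowthSup_le_of_polyGrowthSup_lintegral_lt hf hmono)
  filter_upwards [h] with ω hω
  exact EReal.le_of_forall_rat_lt_imp_le hω

end

theorem limsup_log_le_limsup_log_expectation_general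
    {Ω : Type*} [MeasurableSpace Ω] (μ : Measure Ω)
    (X : ℕ → Ω → ℝ) (hmeas : ∀ n, Measurable (X n))
    (hmono : (∀ ω, Monotone fun n => X n ω) ∨ (∀ ω, Antitone fun n => X n ω)) :
    ∀ᵐ ω ∂μ,
      limsup (fun n : ℕ =>
          ENNReal.log (ENNReal.ofReal (X n ω)) * (((Real.log n)⁻¹ : ℝ) : EReal)) atTop
        ≤ limsup (fun n : ℕ =>
          ENNReal.log (∫⁻ x, ENNReal.ofReal (X n x) ∂μ)
            * (((Real.log n)⁻¹ : ℝ) : EReal)) atTop :=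
  ae_polyGrowthSup_le_polyGrowthSup_lintegral (fun n => (hmeas n).ennreal_ofReal.aemeasurable)
    fun ω => hmono.imp (fun h => ENNReal.ofReal_mono.comp (h ω))
      (fun h => ENNReal.ofReal_mono.comp_antitone (h ω))

/-- For a monotone sequence of nonnegative random variables,
almost surely `limsup (log X_n / log n) ≤ limsup (log E[X_n] / log n)`,
with limsup taken in the extended reals and the convention `log 0 = -∞`
(realized via `ENNReal.log`). -/
theorem limsup_log_le_limsup_log_expectation
    {Ω : Type*} [MeasurableSpace Ω] (μ : Measure Ω) [IsProbabilityMeasure μ]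
    (X : ℕ → Ω → ℝ) (hmeas : ∀ n, Measurable (X n))
    (hnonneg : ∀ n ω, 0 ≤ X n ω)
    (hmono : (∀ ω, Monotone fun n => X n ω) ∨ (∀ ω, Antitone fun n => X n ω)) :
    ∀ᵐ ω ∂μ,
      limsup (fun n : ℕ =>
          ENNReal.log (ENNReal.ofReal (X n ω)) * (((Real.log n)⁻¹ : ℝ) : EReal)) atTop
        ≤ limsup (fun n : ℕ =>
          ENNReal.log (∫⁻ x, ENNReal.ofReal (X n x) ∂μ)
            * (((Real.log n)⁻¹ : ℝ) : EReal)) atTop :=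
  limsup_log_le_limsup_log_expectation_general μ X hmeas hmono
end

section
/- Let X, X_1, X_2, … be independent identically distributed nonnegative random variables, and let c > 0 and t > 0 be such that P(X > r) ≥ c r^{−t} for all sufficiently large r. Set S_0 := 0, S_n := X_1 + ⋯ + X_n, and for k ≥ 0 let S^{−1}(k) := sup{n ≥ 0 : S_n ≤ k}. Then there exists a finite constant C such that, almost surely, S^{−1}(k) ≤ C k^t log log k for all sufficiently large k. -/
/-!
Borel–Cantelli at dyadic scales. With `m_j ≈ (2/c) 2^(jt) log j`, the probability that
`X_0, …, X_(m_j - 1)` all stay below `2^j` is at most `(1 - c 2^(-jt))^(m_j) ≤ j^(-2)`, which is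
summable; so almost surely, for every large `j`, one of the first `m_j` steps exceeds `2^j`.
For `j = ⌈log₂ k⌉`, a walk with `S_n ≤ k ≤ 2^j` has all of its first `n` steps below `2^j`,
hence `n < m_j ≤ (4/c) 2^t k^t log log k`.
-/

open Filter MeasureTheory ProbabilityTheory

open scoped ENNReal

theorem ENNReal.tsum_ne_top_of_eventually_le_ofReal {f : ℕ → ℝ≥0∞} (hf : ∀ n, f n ≠ ∞)
    {g : ℕ → ℝ} (hg : Summable g) (hfg : ∀ᶠ n in atTop, f n ≤ ENNReal.ofReal (g n)) :
    ∑' n, f n ≠ ∞ := by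
  obtain ⟨N, hN⟩ := eventually_atTop.1 hfg
  rw [ENNReal.summable.hasSum.sum_range_add.tsum_eq]
  refine ENNReal.add_ne_top.2 ⟨ENNReal.sum_ne_top.2 fun n _ => hf n, ?_⟩
  refine ne_top_of_le_ne_top ((summable_nat_add_iff N).2 hg).tsum_ofReal_ne_top ?_
  exact ENNReal.tsum_le_tsum fun n => hN (n + N) (Nat.le_add_left N n)

theorem Nat.tendsto_clog_atTop {b : ℕ} (hb : 1 < b) : Tendsto (Nat.clog b) atTop atTop :=
  tendsto_atTop_atTop.2 fun j => ⟨b ^ j, fun k hk => by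
    simpa only [Nat.clog_pow b j hb] using Nat.clog_mono_right b hk⟩

theorem Nat.pow_clog_le_mul {b k : ℕ} (hb : 1 < b) (hk : 1 ≤ k) : b ^ Nat.clog b k ≤ b * k := by
  rcases hk.eq_or_lt with rfl | hk
  · simpa using hb.le
  · calc b ^ Nat.clog b k = b * b ^ (Nat.clog b k - 1) :=
          (mul_pow_sub_one (Nat.clog_pos hb hk).ne' b).symm
      _ ≤ b * k := Nat.mul_le_mul_left _ (Nat.pow_pred_clog_lt_self hb hk).le

theorem Real.log_clog_two_le {k : ℕ} (hk : 3 ≤ Real.log k) :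
    Real.log (Nat.clog 2 k) ≤ 2 * Real.log (Real.log k) := by
  have hk1 : 1 < k := by
    by_contra! h
    interval_cases k <;> norm_num at hk
  set j := Nat.clog 2 k
  have hj : 1 ≤ j := Nat.clog_pos one_lt_two hk1
  have hjk : ((j - 1 : ℕ) : ℝ) * Real.log 2 < Real.log k := by
    rw [← Real.log_pow]
    exact Real.log_lt_log (by positivity)
      (by exact_mod_cast Nat.pow_pred_clog_lt_self one_lt_two hk1)
  have hj3 : (j : ℝ) ≤ 3 * Real.log k := by
    push_cast [hj] at hjk
    nlinarith [Real.log_two_gt_d9]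
  calc Real.log j ≤ Real.log (3 * Real.log k) := Real.log_le_log (by positivity) hj3
    _ = Real.log 3 + Real.log (Real.log k) := Real.log_mul (by norm_num) (by linarith)
    _ ≤ 2 * Real.log (Real.log k) := by
      linarith [Real.log_le_log (by norm_num) hk]

theorem lt_of_sum_range_le_of_exists_lt {x : ℕ → ℝ} (hx : ∀ i, 0 ≤ x i) {n m : ℕ} {R : ℝ}
    (hsum : ∑ i ∈ Finset.range n, x i ≤ R) (hbig : ∃ i < m, R < x i) : n < m := by
  obtain ⟨i, hi, hRi⟩ := hbig
  by_contra! hmn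
  have := Finset.single_le_sum (fun j _ => hx j) (Finset.mem_range.2 (hi.trans_le hmn))
  linarith

/-- If each sample exceeds `2 ^ j` with probability at least `c (2 ^ j) ^ (-t)`, this many
independent samples all stay below `2 ^ j` with probability at most `exp (-2 log j) = j ^ (-2)`. -/
noncomputable def dyadicSampleSize (c t : ℝ) (j : ℕ) : ℕ :=
  ⌈2 / c * ((2 : ℝ) ^ j) ^ t * Real.log j⌉₊

theorem two_mul_log_le_dyadicSampleSize_mul {c : ℝ} (hc : 0 < c) (t : ℝ) (j : ℕ) :
    2 * Real.log j ≤ dyadicSampleSize c t j * (c * ((2 : ℝ) ^ j) ^ (-t)) := by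
  have hR : ((2 : ℝ) ^ j) ^ t * ((2 : ℝ) ^ j) ^ (-t) = 1 := by
    rw [← Real.rpow_add (by positivity)]
    simp
  calc 2 * Real.log j = 2 / c * c * Real.log j * (((2 : ℝ) ^ j) ^ t * ((2 : ℝ) ^ j) ^ (-t)) := by
        rw [hR, div_mul_cancel₀ _ hc.ne', mul_one]
    _ = 2 / c * ((2 : ℝ) ^ j) ^ t * Real.log j * (c * ((2 : ℝ) ^ j) ^ (-t)) := by ring
    _ ≤ dyadicSampleSize c t j * (c * ((2 : ℝ) ^ j) ^ (-t)) := by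
        gcongr
        exact Nat.le_ceil _

theorem le_of_lt_dyadicSampleSize_clog {c t : ℝ} (hc : 0 < c) (ht : 0 ≤ t) {k n : ℕ}
    (hk : 3 ≤ Real.log k) (hn : n < dyadicSampleSize c t (Nat.clog 2 k)) :
    (n : ℝ) ≤ 4 / c * 2 ^ t * (k : ℝ) ^ t * Real.log (Real.log k) := by
  have hk1 : 1 ≤ k := by
    by_contra! h
    interval_cases k
    norm_num at hk
  have hpow : (2 : ℝ) ^ Nat.clog 2 k ≤ 2 * k := by
    exact_mod_cast Nat.pow_clog_le_mul one_lt_two hk1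
  have hlog : 0 ≤ Real.log (Nat.clog 2 k) := Real.log_natCast_nonneg _
  calc (n : ℝ) ≤ 2 / c * ((2 : ℝ) ^ Nat.clog 2 k) ^ t * Real.log (Nat.clog 2 k) :=
        (Nat.lt_ceil.1 hn).le
    _ ≤ 2 / c * (2 * k) ^ t * (2 * Real.log (Real.log k)) := by
        gcongr
        exact Real.log_clog_two_le hk
    _ = 4 / c * 2 ^ t * (k : ℝ) ^ t * Real.log (Real.log k) := by
        rw [Real.mul_rpow (by norm_num) (by positivity)]
        ring

section

variable {Ω : Type*} [MeasurableSpace Ω] {μ : Measure Ω}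

theorem ProbabilityTheory.iIndepFun.measure_biInter_preimage_eq_pow {β : Type*} [MeasurableSpace β]
    {X : ℕ → Ω → β} (hindep : iIndepFun X μ) (hident : ∀ n, IdentDistrib (X n) (X 0) μ μ)
    {s : Set β} (hs : MeasurableSet s) (m : ℕ) :
    μ (⋂ i ∈ Finset.range m, X i ⁻¹' s) = μ (X 0 ⁻¹' s) ^ m := by
  rw [hindep.meas_biInter fun i _ => ⟨s, hs, rfl⟩,
    Finset.prod_congr rfl fun i _ => (hident i).measure_mem_eq hs, Finset.prod_const,
    Finset.card_range]

variable [IsProbabilityMeasure μ] {X : ℕ → Ω → ℝ}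

theorem measure_biInter_preimage_Iic_le_exp (hindep : iIndepFun X μ)
    (hident : ∀ n, IdentDistrib (X n) (X 0) μ μ) {R q : ℝ} (hq : 0 ≤ q)
    (htail : ENNReal.ofReal q ≤ μ {ω | R < X 0 ω}) (m : ℕ) :
    μ (⋂ i ∈ Finset.range m, X i ⁻¹' Set.Iic R) ≤ ENNReal.ofReal (Real.exp (-(m * q))) := by
  have hq1 : q ≤ 1 := ENNReal.ofReal_le_one.mp (htail.trans prob_le_one)
  have hbelow : μ (X 0 ⁻¹' Set.Iic R) ≤ ENNReal.ofReal (1 - q) := by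
    have hcompl : X 0 ⁻¹' Set.Iic R = (X 0 ⁻¹' Set.Ioi R)ᶜ := by
      ext ω
      simp
    rw [hcompl, prob_compl_eq_one_sub₀
      ((hident 0).aemeasurable_fst.nullMeasurableSet_preimage measurableSet_Ioi),
      ENNReal.ofReal_sub _ hq, ENNReal.ofReal_one]
    exact tsub_le_tsub_left htail 1
  calc μ (⋂ i ∈ Finset.range m, X i ⁻¹' Set.Iic R) = μ (X 0 ⁻¹' Set.Iic R) ^ m :=
        hindep.measure_biInter_preimage_eq_pow hident measurableSet_Iic m
    _ ≤ ENNReal.ofReal (1 - q) ^ m := pow_le_pow_left' hbelow m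
    _ = ENNReal.ofReal ((1 - q) ^ m) := (ENNReal.ofReal_pow (by linarith) m).symm
    _ ≤ ENNReal.ofReal (Real.exp (-q) ^ m) :=
        ENNReal.ofReal_le_ofReal (pow_le_pow_left₀ (by linarith) (Real.one_sub_le_exp_neg q) m)
    _ = ENNReal.ofReal (Real.exp (-(m * q))) := by
        rw [← Real.exp_nat_mul, mul_neg]

theorem measure_forall_le_two_pow_le {c t : ℝ} (hindep : iIndepFun X μ)
    (hident : ∀ n, IdentDistrib (X n) (X 0) μ μ) (hc : 0 < c) {j : ℕ} (hj : 1 ≤ j)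
    (htail : ENNReal.ofReal (c * ((2 : ℝ) ^ j) ^ (-t)) ≤ μ {ω | (2 : ℝ) ^ j < X 0 ω}) :
    μ (⋂ i ∈ Finset.range (dyadicSampleSize c t j), X i ⁻¹' Set.Iic ((2 : ℝ) ^ j)) ≤
      ENNReal.ofReal ((j : ℝ) ^ (-2 : ℝ)) := by
  refine (measure_biInter_preimage_Iic_le_exp hindep hident (by positivity) htail _).trans
    (ENNReal.ofReal_le_ofReal ?_)
  rw [Real.rpow_def_of_pos (x := j) (by exact_mod_cast hj)]
  have := two_mul_log_le_dyadicSampleSize_mul hc t j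
  exact Real.exp_le_exp.2 (by linarith)

theorem ae_eventually_exists_lt_two_pow {c t : ℝ} (hindep : iIndepFun X μ)
    (hident : ∀ n, IdentDistrib (X n) (X 0) μ μ) (hc : 0 < c)
    (htail : ∃ r₀ : ℝ, ∀ r : ℝ, r₀ ≤ r → ENNReal.ofReal (c * r ^ (-t)) ≤ μ {ω | r < X 0 ω}) :
    ∀ᵐ ω ∂μ, ∀ᶠ j in atTop, ∃ i < dyadicSampleSize c t j, (2 : ℝ) ^ j < X i ω := by
  obtain ⟨r₀, hr₀⟩ := htail
  have hsmall : ∀ᶠ j in atTop, μ (⋂ i ∈ Finset.range (dyadicSampleSize c t j),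
      X i ⁻¹' Set.Iic ((2 : ℝ) ^ j)) ≤ ENNReal.ofReal ((j : ℝ) ^ (-2 : ℝ)) := by
    filter_upwards [eventually_ge_atTop 1,
      (tendsto_pow_atTop_atTop_of_one_lt one_lt_two).eventually_ge_atTop r₀] with j hj hjr₀
    exact measure_forall_le_two_pow_le hindep hident hc hj (hr₀ _ hjr₀)
  filter_upwards [ae_eventually_notMem (ENNReal.tsum_ne_top_of_eventually_le_ofReal
    (fun _ => measure_ne_top μ _) (Real.summable_nat_rpow.2 (by norm_num)) hsmall)] with ω hω
  filter_upwards [hω] with j hj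
  simpa using hj

end

theorem inverse_random_walk_bound_general
    {Ω : Type*} [MeasurableSpace Ω] (μ : Measure Ω) [IsProbabilityMeasure μ]
    (X : ℕ → Ω → ℝ)
    (hnonneg : ∀ n ω, 0 ≤ X n ω)
    (hindep : iIndepFun X μ)
    (hident : ∀ n, IdentDistrib (X n) (X 0) μ μ)
    (c t : ℝ) (hc : 0 < c) (ht : 0 < t)
    (htail : ∃ r₀ : ℝ, ∀ r : ℝ, r₀ ≤ r →
      ENNReal.ofReal (c * r ^ (-t)) ≤ μ {ω | r < X 0 ω}) :
    ∃ C : ℝ, ∀ᵐ ω ∂μ, ∀ᶠ k : ℕ in atTop, ∀ n : ℕ,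
      (∑ i ∈ Finset.range n, X i ω) ≤ (k : ℝ) →
        (n : ℝ) ≤ C * (k : ℝ) ^ t * Real.log (Real.log k) := by
  refine ⟨4 / c * 2 ^ t, ?_⟩
  filter_upwards [ae_eventually_exists_lt_two_pow hindep hident hc htail] with ω hω
  have hloglog : Tendsto (fun k : ℕ => Real.log k) atTop atTop :=
    Real.tendsto_log_atTop.comp tendsto_natCast_atTop_atTop
  filter_upwards [(Nat.tendsto_clog_atTop one_lt_two).eventually hω,
    hloglog.eventually_ge_atTop 3] with k hbig hk n hn
  have hsum : ∑ i ∈ Finset.range n, X i ω ≤ (2 : ℝ) ^ Nat.clog 2 k :=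
    hn.trans (by exact_mod_cast Nat.le_pow_clog one_lt_two k)
  exact le_of_lt_dyadicSampleSize_clog hc ht.le hk
    (lt_of_sum_range_le_of_exists_lt (hnonneg · ω) hsum hbig)

/-- For an i.i.d. nonnegative sequence with `P(X > r) ≥ c r^(-t)` for large `r`,
there is a finite constant `C` such that almost surely, for all sufficiently large `k`,
`S⁻¹(k) ≤ C k^t log log k`, i.e. every `n` with `S_n ≤ k` satisfies
`n ≤ C k^t log log k`. -/
theorem inverse_random_walk_bound
    {Ω : Type*} [MeasurableSpace Ω] (μ : Measure Ω) [IsProbabilityMeasure μ]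
    (X : ℕ → Ω → ℝ) (hmeas : ∀ n, Measurable (X n))
    (hnonneg : ∀ n ω, 0 ≤ X n ω)
    (hindep : iIndepFun X μ)
    (hident : ∀ n, IdentDistrib (X n) (X 0) μ μ)
    (c t : ℝ) (hc : 0 < c) (ht : 0 < t)
    (htail : ∃ r₀ : ℝ, ∀ r : ℝ, r₀ ≤ r →
      ENNReal.ofReal (c * r ^ (-t)) ≤ μ {ω | r < X 0 ω}) :
    ∃ C : ℝ, ∀ᵐ ω ∂μ, ∀ᶠ k : ℕ in atTop, ∀ n : ℕ,
      (∑ i ∈ Finset.range n, X i ω) ≤ (k : ℝ) →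
        (n : ℝ) ≤ C * (k : ℝ) ^ t * Real.log (Real.log k) :=
  inverse_random_walk_bound_general μ X hnonneg hindep hident c t hc ht htail
end

section
/- Let (p_n)_{n≥1} be nonnegative reals with Σ_{n≥1} p_n = 1 whose mean m := Σ_{n≥1} n p_n satisfies 1 < m < ∞, and let f : [0,1] → [0,1] be the probability generating function f(s) = Σ_{n≥1} p_n s^n. Then there exists a > 0 such that f(s) ≤ a s/(a + 1 − s) for all s ∈ [0,1]. -/
/-- If `f(s) = Σ_{n≥1} p_n sⁿ` is a probability generating function with mean
`m = Σ n p_n ∈ (1, ∞)`, then there is `a > 0` with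
`f(s) ≤ a s / (a + 1 - s)` on `[0,1]`. -/
theorem pgf_le_fractional_linear
    (p : ℕ → ℝ) (hp0 : p 0 = 0) (hp : ∀ n, 0 ≤ p n)
    (hsum : ∑' n : ℕ, p n = 1)
    (hmean_summable : Summable fun n : ℕ => (n : ℝ) * p n)
    (hmean : 1 < ∑' n : ℕ, (n : ℝ) * p n) :
    ∃ a : ℝ, 0 < a ∧ ∀ s ∈ Set.Icc (0 : ℝ) 1,
      (∑' n : ℕ, p n * s ^ n) ≤ a * s / (a + 1 - s) := by
  -- p is summable
  have hps : Summable p := by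
    refine Summable.of_nonneg_of_le hp (fun n => ?_) hmean_summable
    match n with
    | 0 => simp [hp0]
    | (n+1) =>
        have : (1 : ℝ) ≤ (n+1 : ℕ) := by exact_mod_cast Nat.one_le_iff_ne_zero.2 (by omega)
        exact le_mul_of_one_le_left (hp _) this
  -- there is k ≥ 2 with p k > 0
  have hkex : ∃ k, 2 ≤ k ∧ 0 < p k := by
    by_contra h
    push_neg at h
    have hz : ∀ k, 2 ≤ k → p k = 0 := fun k hk => le_antisymm (h k hk) (hp k)
    have heq : (fun n : ℕ => (n : ℝ) * p n) = p := by
      funext n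
      match n with
      | 0 => simp [hp0]
      | 1 => simp
      | (n+2) => simp [hz (n+2) (by omega)]
    rw [heq, hsum] at hmean
    exact lt_irrefl 1 hmean
  obtain ⟨k, hk2, hpk⟩ := hkex
  have hpk1 : p k ≤ 1 := by
    have := Summable.le_tsum hps k (fun i _ => hp i)
    linarith [hsum ▸ this]
  set t := p k with ht
  refine ⟨1 / t, by positivity, fun s hs => ?_⟩
  obtain ⟨hs0, hs1⟩ := hs
  set a : ℝ := 1 / t with ha
  have ha0 : 0 < a := by positivity
  have hat : a * t = 1 := one_div_mul_cancel (ne_of_gt hpk)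
  -- summability of the pgf terms
  have hterm_nonneg : ∀ n, 0 ≤ p n * s ^ n := fun n => mul_nonneg (hp n) (pow_nonneg hs0 n)
  have hterm_le : ∀ n, p n * s ^ n ≤ p n := fun n =>
    mul_le_of_le_one_right (hp n) (pow_le_one₀ hs0 hs1)
  have hfs : Summable (fun n => p n * s ^ n) :=
    Summable.of_nonneg_of_le hterm_nonneg hterm_le hps
  -- step 1 : f(s) ≤ t * s^k + (1 - t) * s
  have step1 : (∑' n : ℕ, p n * s ^ n) ≤ t * s ^ k + (1 - t) * s := by
    rw [Summable.tsum_eq_add_tsum_ite hfs k]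
    have hineq : ∀ n, (if n = k then 0 else p n * s ^ n) ≤
        (if n = k then 0 else p n) * s := by
      intro n
      split_ifs with h
      · simp
      · match n with
        | 0 => simp [hp0]
        | (m+1) =>
            have hsn : s ^ (m+1) ≤ s := by
              calc s ^ (m+1) ≤ s ^ 1 := pow_le_pow_of_le_one hs0 hs1 (by omega)
              _ = s := pow_one s
            exact mul_le_mul_of_nonneg_left hsn (hp _)
    have hsum1 : Summable (fun n => if n = k then 0 else p n * s ^ n) := by
      refine Summable.of_nonneg_of_le (fun n => ?_) (fun n => ?_) hps
      · split_ifs; exacts [le_refl 0, hterm_nonneg n]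
      · split_ifs with h; exacts [hp n, hterm_le n]
    have hsum2 : Summable (fun n => (if n = k then 0 else p n) * s) := by
      refine Summable.mul_right s ?_
      refine Summable.of_nonneg_of_le (fun n => ?_) (fun n => ?_) hps
      · split_ifs; exacts [le_refl 0, hp n]
      · split_ifs; exacts [hp n, le_refl (p n)]
    have hle := Summable.tsum_le_tsum hineq hsum1 hsum2
    have htsum2 : (∑' n, (if n = k then 0 else p n) * s) = (1 - t) * s := by
      rw [tsum_mul_right]
      have := Summable.tsum_eq_add_tsum_ite hps k
      rw [hsum] at this
      have : (∑' n, if n = k then 0 else p n) = 1 - t := by linarith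
      rw [this]
    rw [htsum2] at hle
    linarith
  -- step 2 : t * s^k + (1 - t) * s ≤ a * s / (a + 1 - s)
  have hden : 0 < a + 1 - s := by linarith
  rw [le_div_iff₀ hden]
  have hsk : s ^ k ≤ s ^ 2 := pow_le_pow_of_le_one hs0 hs1 hk2
  have key : (t * s ^ k + (1 - t) * s) * (1 + t * (1 - s)) ≤ s := by
    nlinarith [sq_nonneg (t * (1 - s)), mul_nonneg hs0 (sq_nonneg (t * (1 - s))),
      mul_nonneg (mul_nonneg hpk.le (sub_nonneg.2 hsk)) (sub_nonneg.2 hs1),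
      mul_nonneg (mul_nonneg hpk.le (sub_nonneg.2 hsk))
        (mul_nonneg hpk.le (sub_nonneg.2 hs1))]
  have hden_eq : a + 1 - s = a * (1 + t * (1 - s)) := by
    have : a * (1 + t * (1 - s)) = a + (a * t) * (1 - s) := by ring
    rw [this, hat]; ring
  calc (∑' n : ℕ, p n * s ^ n) * (a + 1 - s)
      ≤ (t * s ^ k + (1 - t) * s) * (a + 1 - s) := by
        apply mul_le_mul_of_nonneg_right step1 hden.le
    _ = a * ((t * s ^ k + (1 - t) * s) * (1 + t * (1 - s))) := by rw [hden_eq]; ring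
    _ ≤ a * s := mul_le_mul_of_nonneg_left key ha0.le
    _ = a * s := rfl
end

section
/- Let (p_n)_{n≥1} be nonnegative reals with Σ_{n≥1} p_n = 1 whose mean m := Σ_{n≥1} n p_n satisfies 1 < m < ∞, and let f : [0,1] → [0,1] be the probability generating function f(s) = Σ_{n≥1} p_n s^n. Then there exists a > 0 such that for every α ≥ 0 and every integer n ≥ 1, the n-fold iterate of f satisfies f^{(n)}(1 − n^{−α}) ≤ a^n/(a^n + n^{−α}(a+1)^n). Consequently, for every α ≥ 0, log f^{(n)}(1 − n^{−α}) / log n → −∞ as n → ∞; i.e., f^{(n)}(1 − n^{−α}) decays faster than any power of n. -/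
open Filter

set_option maxHeartbeats 1000000 in
/-- For a supercritical probability generating function `f(s) = Σ_{n≥1} p_n sⁿ`
(mean `m ∈ (1,∞)`), there is `a > 0` such that the `n`-fold iterate satisfies
`f^(n)(1 - n^(-α)) ≤ aⁿ/(aⁿ + n^(-α) (a+1)ⁿ)` for all `α ≥ 0` and `n ≥ 1`.
Consequently, `log f^(n)(1 - n^(-α)) / log n → -∞` (in the extended reals, with
the convention `log 0 = -∞`, realized via `ENNReal.log`). -/
theorem pgf_iterate_superpolynomial_decay
    (p : ℕ → ℝ) (hp0 : p 0 = 0) (hp : ∀ n, 0 ≤ p n)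
    (hsum : ∑' n : ℕ, p n = 1)
    (hmean_summable : Summable fun n : ℕ => (n : ℝ) * p n)
    (hmean : 1 < ∑' n : ℕ, (n : ℝ) * p n) :
    (∃ a : ℝ, 0 < a ∧ ∀ α : ℝ, 0 ≤ α → ∀ n : ℕ, 1 ≤ n →
        (fun s : ℝ => ∑' k : ℕ, p k * s ^ k)^[n] (1 - (n : ℝ) ^ (-α))
          ≤ a ^ n / (a ^ n + (n : ℝ) ^ (-α) * (a + 1) ^ n))
    ∧ ∀ α : ℝ, 0 ≤ α →
        Tendsto (fun n : ℕ =>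
            ENNReal.log (ENNReal.ofReal
                ((fun s : ℝ => ∑' k : ℕ, p k * s ^ k)^[n] (1 - (n : ℝ) ^ (-α))))
              * (((Real.log n)⁻¹ : ℝ) : EReal))
          atTop (nhds (⊥ : EReal)) := by
  classical
  set f : ℝ → ℝ := fun s : ℝ => ∑' k : ℕ, p k * s ^ k with hfdef
  -- summability of p
  have hsp : Summable p := by
    by_contra h
    rw [tsum_eq_zero_of_not_summable h] at hsum; norm_num at hsum
  -- p 1 < 1
  have hp1lt : p 1 < 1 := by
    by_contra h
    push_neg at h
    have h1 : p 1 ≤ 1 := hsum ▸ Summable.le_tsum hsp 1 (fun k _ => hp k)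
    have hp1' : p 1 = 1 := le_antisymm h1 h
    have hk0 : ∀ k, k ≠ 1 → p k = 0 := by
      intro k hk
      have h2 : p 1 + p k ≤ 1 := by
        have h3 := Summable.sum_le_tsum ({1, k} : Finset ℕ) (fun i _ => hp i) hsp
        rwa [Finset.sum_pair (Ne.symm hk), hsum] at h3
      linarith [hp k]
    have h4 : (∑' n : ℕ, (n : ℝ) * p n) = 1 := by
      rw [tsum_eq_single 1 (fun k hk => by simp [hk0 k hk])]
      simp [hp1']
    linarith
  set b : ℝ := 1 - p 1 with hbdef
  have hbpos : 0 < b := by simp only [hbdef]; linarith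
  set a : ℝ := b⁻¹ with hadef
  have hapos : 0 < a := inv_pos.mpr hbpos
  have hab : a * b = 1 := inv_mul_cancel₀ hbpos.ne'
  -- quadratic upper bound for f
  have hf_quad : ∀ s : ℝ, 0 ≤ s → s ≤ 1 → f s ≤ p 1 * s + b * s ^ 2 := by
    intro s hs0 hs1
    have hsumm : Summable (fun k : ℕ => p k * s ^ k) := by
      refine Summable.of_nonneg_of_le (fun k => mul_nonneg (hp k) (pow_nonneg hs0 k))
        (fun k => ?_) hsp
      exact mul_le_of_le_one_right (hp k) (pow_le_one₀ hs0 hs1)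
    have hif : Summable (fun k : ℕ => if k = 1 then p 1 * s - p 1 * s ^ 2 else 0) :=
      summable_of_ne_finset_zero (s := {1}) (fun k hk => if_neg (by simpa using hk))
    have hmulsq : Summable (fun k : ℕ => p k * s ^ 2) := hsp.mul_right _
    have hle : ∀ k : ℕ, p k * s ^ k ≤ p k * s ^ 2 +
        (if k = 1 then p 1 * s - p 1 * s ^ 2 else 0) := by
      intro k
      match k with
      | 0 => simp [hp0]
      | 1 => simp
      | (k+2) =>
        have h5 : s ^ (k+2) ≤ s ^ 2 := by
          calc s ^ (k+2) = s ^ 2 * s ^ k := by ring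
            _ ≤ s ^ 2 * 1 := mul_le_mul_of_nonneg_left (pow_le_one₀ hs0 hs1) (sq_nonneg s)
            _ = s ^ 2 := mul_one _
        have h6 := mul_le_mul_of_nonneg_left h5 (hp (k+2))
        simpa using h6
    calc f s ≤ ∑' k : ℕ, (p k * s ^ 2 + if k = 1 then p 1 * s - p 1 * s ^ 2 else 0) :=
          Summable.tsum_le_tsum hle hsumm (hmulsq.add hif)
      _ = (∑' k : ℕ, p k * s ^ 2) +
            ∑' k : ℕ, (if k = 1 then p 1 * s - p 1 * s ^ 2 else 0) := Summable.tsum_add hmulsq hif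
      _ = 1 * s ^ 2 + (p 1 * s - p 1 * s ^ 2) := by rw [tsum_mul_right, hsum, tsum_ite_eq]
      _ = p 1 * s + b * s ^ 2 := by simp only [hbdef]; ring
  have hf_nonneg : ∀ s : ℝ, 0 ≤ s → 0 ≤ f s := fun s hs =>
    tsum_nonneg (fun k => mul_nonneg (hp k) (pow_nonneg hs k))
  have hf_le_one : ∀ s : ℝ, 0 ≤ s → s ≤ 1 → f s ≤ 1 := by
    intro s hs0 hs1
    have h1 := hf_quad s hs0 hs1
    have h2 : s ^ 2 ≤ 1 := pow_le_one₀ hs0 hs1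
    nlinarith [hp 1, hbpos.le]
  have hiter_mem : ∀ s : ℝ, 0 ≤ s → s ≤ 1 → ∀ n : ℕ, 0 ≤ f^[n] s ∧ f^[n] s ≤ 1 := by
    intro s hs0 hs1 n
    induction n with
    | zero => simpa using ⟨hs0, hs1⟩
    | succ n ih =>
      rw [Function.iterate_succ_apply']
      exact ⟨hf_nonneg _ ih.1, hf_le_one _ ih.1 ih.2⟩
  -- key fractional-linear domination
  have hkey : ∀ s : ℝ, 0 ≤ s → s ≤ 1 → f s ≤ a * s / (a + 1 - s) := by
    intro s hs0 hs1
    have hden : 0 < a + 1 - s := by linarith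
    rw [le_div_iff₀ hden]
    have h1 := hf_quad s hs0 hs1
    have h2 : (p 1 * s + b * s ^ 2) * (a + 1 - s) ≤ a * s := by
      have hid : a * s - (p 1 * s + b * s ^ 2) * (a + 1 - s)
          = (a * b - 1) * (s - s ^ 2) + s * b * (1 - s) ^ 2 := by
        simp only [hbdef]; ring
      nlinarith [mul_nonneg (mul_nonneg hs0 hbpos.le) (sq_nonneg (1 - s))]
    calc f s * (a + 1 - s) ≤ (p 1 * s + b * s ^ 2) * (a + 1 - s) :=
          mul_le_mul_of_nonneg_right h1 hden.le
      _ ≤ a * s := h2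
  -- iterated bound against iterated fractional-linear map
  have hGmain : ∀ s : ℝ, 0 ≤ s → s ≤ 1 → ∀ n : ℕ,
      f^[n] s ≤ a ^ n * s / (a ^ n + ((a + 1) ^ n - a ^ n) * (1 - s)) := by
    intro s hs0 hs1 n
    induction n with
    | zero => simp
    | succ n ih =>
      have hu : (0:ℝ) ≤ 1 - s := by linarith
      have hc : a ^ n ≤ (a + 1) ^ n := pow_le_pow_left₀ hapos.le (by linarith) n
      have hc' : a ^ (n+1) ≤ (a + 1) ^ (n+1) := pow_le_pow_left₀ hapos.le (by linarith) (n+1)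
      have hDpos : 0 < a ^ n + ((a + 1) ^ n - a ^ n) * (1 - s) := by
        have := mul_nonneg (sub_nonneg.mpr hc) hu
        nlinarith [pow_pos hapos n]
      have hD1pos : 0 < a ^ (n+1) + ((a + 1) ^ (n+1) - a ^ (n+1)) * (1 - s) := by
        have := mul_nonneg (sub_nonneg.mpr hc') hu
        nlinarith [pow_pos hapos (n+1)]
      obtain ⟨hx0, hx1⟩ := hiter_mem s hs0 hs1 n
      set x : ℝ := f^[n] s with hxdef
      have hxD : x * (a ^ n + ((a + 1) ^ n - a ^ n) * (1 - s)) ≤ a ^ n * s :=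
        (le_div_iff₀ hDpos).mp ih
      rw [Function.iterate_succ_apply']
      have h3 : f x ≤ a * x / (a + 1 - x) := hkey x hx0 hx1
      have hdenx : 0 < a + 1 - x := by linarith
      have h4 : a * x / (a + 1 - x)
          ≤ a ^ (n+1) * s / (a ^ (n+1) + ((a + 1) ^ (n+1) - a ^ (n+1)) * (1 - s)) := by
        rw [div_le_div_iff₀ hdenx hD1pos]
        have hid2 : a ^ (n+1) * s * (a + 1 - x)
            - a * x * (a ^ (n+1) + ((a + 1) ^ (n+1) - a ^ (n+1)) * (1 - s))
            = a * (a + 1) * (a ^ n * s - x * (a ^ n + ((a + 1) ^ n - a ^ n) * (1 - s))) := by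
          ring
        nlinarith [mul_nonneg (mul_nonneg hapos.le (by linarith : (0:ℝ) ≤ a + 1))
          (sub_nonneg.mpr hxD)]
      exact h3.trans h4
  -- the main quantitative bound
  have hbound : ∀ α : ℝ, 0 ≤ α → ∀ n : ℕ, 1 ≤ n →
      f^[n] (1 - (n : ℝ) ^ (-α)) ≤ a ^ n / (a ^ n + (n : ℝ) ^ (-α) * (a + 1) ^ n) := by
    intro α hα n hn
    have hnpos : (0:ℝ) < n := by exact_mod_cast hn
    set t : ℝ := (n : ℝ) ^ (-α) with htdef
    have ht0 : 0 < t := Real.rpow_pos_of_pos hnpos _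
    have ht1 : t ≤ 1 :=
      Real.rpow_le_one_of_one_le_of_nonpos (by exact_mod_cast hn) (by linarith)
    have hs0 : (0:ℝ) ≤ 1 - t := by linarith
    have hs1 : (1:ℝ) - t ≤ 1 := by linarith
    have hG := hGmain (1 - t) hs0 hs1 n
    have h1mt : (1:ℝ) - (1 - t) = t := by ring
    rw [h1mt] at hG
    have hc : a ^ n ≤ (a + 1) ^ n := pow_le_pow_left₀ hapos.le (by linarith) n
    have hDpos : 0 < a ^ n + ((a + 1) ^ n - a ^ n) * t := by
      have := mul_nonneg (sub_nonneg.mpr hc) ht0.le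
      nlinarith [pow_pos hapos n]
    have hD2pos : 0 < a ^ n + t * (a + 1) ^ n := by
      have := mul_nonneg ht0.le (pow_nonneg (by linarith : (0:ℝ) ≤ a + 1) n)
      nlinarith [pow_pos hapos n]
    have h5 : a ^ n * (1 - t) / (a ^ n + ((a + 1) ^ n - a ^ n) * t)
        ≤ a ^ n / (a ^ n + t * (a + 1) ^ n) := by
      rw [div_le_div_iff₀ hDpos hD2pos]
      have hidf : a ^ n * (a ^ n + ((a + 1) ^ n - a ^ n) * t)
          - a ^ n * (1 - t) * (a ^ n + t * (a + 1) ^ n)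
          = a ^ n * (a + 1) ^ n * t ^ 2 := by ring
      nlinarith [mul_nonneg (mul_nonneg (pow_nonneg hapos.le n)
        (pow_nonneg (by linarith : (0:ℝ) ≤ a + 1) n)) (sq_nonneg t)]
    exact hG.trans h5
  refine ⟨⟨a, hapos, hbound⟩, ?_⟩
  -- part 2
  intro α hα
  rw [EReal.tendsto_nhds_bot_iff_real]
  intro x
  set L : ℝ := Real.log (a + 1) - Real.log a with hLdef
  have hLpos : 0 < L := by
    have := Real.log_lt_log hapos (by linarith : a < a + 1)
    simp only [hLdef]; linarith
  -- sqrt n → ∞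
  have hsq : Tendsto (fun n : ℕ => Real.sqrt n) atTop atTop := by
    rw [tendsto_atTop_atTop]
    intro C
    obtain ⟨N, hN⟩ := exists_nat_ge (C ^ 2)
    refine ⟨N, fun n hn => ?_⟩
    rcases le_or_gt C 0 with h | h
    · exact h.trans (Real.sqrt_nonneg _)
    · rw [show C = Real.sqrt (C ^ 2) from (Real.sqrt_sq h.le).symm]
      exact Real.sqrt_le_sqrt (hN.trans (by exact_mod_cast hn))
  have hsqL : Tendsto (fun n : ℕ => α - Real.sqrt n * (L / 2)) atTop atBot := by
    have h1 : Tendsto (fun n : ℕ => Real.sqrt n * (L / 2)) atTop atTop :=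
      hsq.atTop_mul_const (by linarith)
    have h2 : Tendsto (fun n : ℕ => -(Real.sqrt n * (L / 2))) atTop atBot :=
      tendsto_neg_atTop_atBot.comp h1
    simpa [sub_eq_add_neg] using tendsto_atBot_add_const_left atTop α h2
  have hev : ∀ᶠ n : ℕ in atTop, α - Real.sqrt n * (L / 2) < x :=
    hsqL.eventually (eventually_lt_atBot x)
  filter_upwards [eventually_ge_atTop 2, hev] with n hn2 hltx
  -- setup for this n
  have hn1 : 1 ≤ n := by omega
  have hnpos : (0:ℝ) < n := by exact_mod_cast hn1
  have hn2' : (2:ℝ) ≤ n := by exact_mod_cast hn2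
  have hlogn : 0 < Real.log n := Real.log_pos (by linarith)
  set t : ℝ := (n : ℝ) ^ (-α) with htdef
  have ht0 : 0 < t := Real.rpow_pos_of_pos hnpos _
  set B : ℝ := a ^ n / (a ^ n + t * (a + 1) ^ n) with hBdef
  have hapow : 0 < a ^ n := pow_pos hapos n
  have ha1pow : 0 < (a + 1) ^ n := pow_pos (by linarith) n
  have hD2pos : 0 < a ^ n + t * (a + 1) ^ n := by positivity
  have hBpos : 0 < B := div_pos hapow hD2pos
  have hxB := hbound α hα n hn1
  -- log B bound
  have hBle : B ≤ a ^ n / (t * (a + 1) ^ n) := by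
    apply div_le_div_of_nonneg_left hapow.le (by positivity)
    linarith
  have hlogB : Real.log B ≤ α * Real.log n - (n : ℝ) * L := by
    have hlogR : Real.log (a ^ n / (t * (a + 1) ^ n))
        = (n : ℝ) * Real.log a - (-α * Real.log n + (n : ℝ) * Real.log (a + 1)) := by
      rw [Real.log_div hapow.ne' (by positivity), Real.log_mul ht0.ne' ha1pow.ne',
        Real.log_pow, Real.log_pow, htdef, Real.log_rpow hnpos]
    have h1 : Real.log B ≤ Real.log (a ^ n / (t * (a + 1) ^ n)) :=
      Real.log_le_log hBpos hBle
    rw [hlogR] at h1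
    have h2 : α * Real.log n - (n : ℝ) * L
        = (n : ℝ) * Real.log a - (-α * Real.log n + (n : ℝ) * Real.log (a + 1)) := by
      simp only [hLdef]; ring
    linarith
  -- chain of inequalities in EReal
  have hmono : ENNReal.log (ENNReal.ofReal (f^[n] (1 - t)))
      ≤ ((Real.log B : ℝ) : EReal) := by
    rw [← ENNReal.log_ofReal_of_pos hBpos]
    exact ENNReal.log_monotone (ENNReal.ofReal_le_ofReal hxB)
  have hinv0 : (0:ℝ) ≤ (Real.log n)⁻¹ := inv_nonneg.mpr hlogn.le
  have hstep1 : ENNReal.log (ENNReal.ofReal (f^[n] (1 - t)))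
        * (((Real.log n)⁻¹ : ℝ) : EReal)
      ≤ ((Real.log B * (Real.log n)⁻¹ : ℝ) : EReal) := by
    rw [EReal.coe_mul]
    exact mul_le_mul_of_nonneg_right hmono (by exact_mod_cast hinv0)
  -- real estimate
  have hreal : Real.log B * (Real.log n)⁻¹ ≤ α - Real.sqrt n * (L / 2) := by
    have h1 : Real.log B * (Real.log n)⁻¹ ≤ (α * Real.log n - (n : ℝ) * L) * (Real.log n)⁻¹ :=
      mul_le_mul_of_nonneg_right hlogB hinv0
    have h2 : (α * Real.log n - (n : ℝ) * L) * (Real.log n)⁻¹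
        = α - (n : ℝ) * L / Real.log n := by
      field_simp
    have hsqrtpos : 0 < Real.sqrt n := Real.sqrt_pos.mpr hnpos
    have hlog2 : Real.log n ≤ 2 * Real.sqrt n := by
      have hs : Real.sqrt n ^ 2 = (n:ℝ) := Real.sq_sqrt hnpos.le
      have := Real.log_le_sub_one_of_pos hsqrtpos
      calc Real.log n = Real.log (Real.sqrt n ^ 2) := by rw [hs]
        _ = 2 * Real.log (Real.sqrt n) := by rw [Real.log_pow]; push_cast; ring
        _ ≤ 2 * (Real.sqrt n - 1) := by linarith
        _ ≤ 2 * Real.sqrt n := by linarith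
    have h3 : Real.sqrt n * (L / 2) ≤ (n : ℝ) * L / Real.log n := by
      rw [le_div_iff₀ hlogn]
      have h4 : Real.sqrt n * (L / 2) * Real.log n
          ≤ Real.sqrt n * (L / 2) * (2 * Real.sqrt n) :=
        mul_le_mul_of_nonneg_left hlog2 (by positivity)
      have hs : Real.sqrt n * Real.sqrt n = (n:ℝ) := Real.mul_self_sqrt hnpos.le
      nlinarith [h4]
    linarith [h1, h2 ▸ h1]
  -- conclude
  calc ENNReal.log (ENNReal.ofReal (f^[n] (1 - t))) * (((Real.log n)⁻¹ : ℝ) : EReal)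
      ≤ ((Real.log B * (Real.log n)⁻¹ : ℝ) : EReal) := hstep1
    _ ≤ ((α - Real.sqrt n * (L / 2) : ℝ) : EReal) := by exact_mod_cast hreal
    _ < (x : EReal) := by exact_mod_cast hltx
end

section
/- Let (Ω, F, μ) be a σ-finite measure space, let M ≥ 0, and let p : L¹(μ) → ℝ be a functional satisfying: (i) p(f + g) ≤ p(f) + p(g) for all f, g ∈ L¹(μ); (ii) p(t f) = t p(f) for all f ∈ L¹(μ) and t ≥ 0; (iii) |p(f)| ≤ M ∫ |f| dμ for all f ∈ L¹(μ); and (iv) p(f) = 0 whenever f ≤ 0 μ-almost everywhere. Then for every h ∈ L¹(μ) there exists w ∈ L^∞(μ) with 0 ≤ w ≤ M μ-almost everywhere such that ∫ f w dμ ≤ p(f) for every f ∈ L¹(μ), and ∫ h w dμ = p(h). -/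
/-!
Hahn–Banach gives a linear `l ≤ p` with `l h = p h`; the bounds on `p` make `l` continuous of
norm at most `M` and positive, so everything reduces to representing a continuous functional on
`L¹(μ)` by a bounded density. By σ-finiteness there is `ψ ∈ L²(μ)` with `ψ > 0`, and
`φ ↦ l (φ ψ)` is continuous on `L²(μ)`, so by Riesz it is `φ ↦ ∫ φ u` for some `u ∈ L²(μ)`.
Then `w = u / ψ` works: testing against `1ₛ ψ` gives `|w| ≤ ‖l‖`, after which `l` and
`f ↦ ∫ f w` are continuous functionals agreeing on the dense range of `φ ↦ φ ψ`.
-/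

open MeasureTheory Filter Topology
open scoped ENNReal

theorem exists_linearMap_le_sublinear_eq {E : Type*} [AddCommGroup E] [Module ℝ E] (N : E → ℝ)
    (N_hom : ∀ c : ℝ, 0 < c → ∀ x, N (c • x) = c * N x) (N_add : ∀ x y, N (x + y) ≤ N x + N y)
    (x₀ : E) : ∃ g : E →ₗ[ℝ] ℝ, (∀ x, g x ≤ N x) ∧ g x₀ = N x₀ := by
  have N_zero : N 0 = 0 := by
    have := N_hom 2 two_pos 0
    rw [smul_zero] at this
    linarith
  have le_N (c : ℝ) : c * N x₀ ≤ N (c • x₀) := by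
    rcases lt_trichotomy c 0 with hc | rfl | hc
    · have := N_add (c • x₀) ((-c) • x₀)
      rw [← add_smul, add_neg_cancel, zero_smul, N_zero, N_hom (-c) (by linarith)] at this
      linarith
    · simp [N_zero]
    · exact (N_hom c hc x₀).ge
  have well_defined (c : ℝ) (hc : c • x₀ = 0) : c • N x₀ = 0 := by
    have h₁ := le_N c
    have h₂ := le_N (-c)
    rw [hc, N_zero] at h₁
    rw [neg_smul, hc, neg_zero, N_zero] at h₂
    rw [smul_eq_mul]
    linarith
  obtain ⟨g, hgf, hgN⟩ := exists_extension_of_le_sublinear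
    (LinearPMap.mkSpanSingleton' x₀ (N x₀) well_defined) N N_hom N_add <| by
      rintro ⟨x, hx⟩
      obtain ⟨c, rfl⟩ := Submodule.mem_span_singleton.1 hx
      simpa only [LinearPMap.mkSpanSingleton'_apply, RingHom.id_apply, smul_eq_mul] using le_N c
  exact ⟨g, hgN, (hgf ⟨x₀, Submodule.mem_span_singleton_self x₀⟩).trans
    (LinearPMap.mkSpanSingleton'_apply_self _ _ _ _)⟩

section L1Duality

variable {Ω : Type*} [MeasurableSpace Ω] {μ : Measure Ω}

theorem exists_pos_memLp_two (μ : Measure Ω) [SigmaFinite μ] :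
    ∃ ψ : Ω → ℝ, Measurable ψ ∧ (∀ x, 0 < ψ x) ∧ MemLp ψ 2 μ := by
  obtain ⟨g, hg_pos, hg_meas, hg_int⟩ := exists_pos_lintegral_lt_of_sigmaFinite μ one_ne_zero
  have hg : Integrable (fun x => (g x : ℝ)) μ := by
    refine ⟨hg_meas.coe_nnreal_real.aestronglyMeasurable, ?_⟩
    rw [hasFiniteIntegral_iff_ofNNReal]
    exact hg_int.trans ENNReal.one_lt_top
  refine ⟨fun x => √(g x), hg_meas.coe_nnreal_real.sqrt, fun x => Real.sqrt_pos.2 (hg_pos x),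
    ?_⟩
  rw [memLp_two_iff_integrable_sq hg_meas.coe_nnreal_real.sqrt.aestronglyMeasurable]
  simpa only [Real.sq_sqrt (NNReal.coe_nonneg _)] using hg

noncomputable def mulL2ToL1 (ψ : Lp ℝ 2 μ) : Lp ℝ 2 μ →L[ℝ] Lp ℝ 1 μ :=
  ((ContinuousLinearMap.mul ℝ ℝ).holderL μ 2 2 1).flip ψ

theorem coeFn_mulL2ToL1 (ψ φ : Lp ℝ 2 μ) : mulL2ToL1 ψ φ =ᵐ[μ] fun x => φ x * ψ x :=
  (ContinuousLinearMap.mul ℝ ℝ).coeFn_holder φ ψ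

theorem tendsto_integral_norm_indicator_sub {E : Type*} [NormedAddCommGroup E] {f : Ω → E}
    (hf : Integrable f μ) {A : ℕ → Set Ω} (hA : ∀ n, MeasurableSet (A n))
    (h_mem : ∀ x, ∀ᶠ n in atTop, x ∈ A n) :
    Tendsto (fun n => ∫ x, ‖(A n).indicator f x - f x‖ ∂μ) atTop (𝓝 0) := by
  simpa using tendsto_integral_of_dominated_convergence (f := fun _ => 0) (fun x => ‖f x‖)
    (fun n => ((hf.1.indicator (hA n)).sub hf.1).norm) hf.norm
    (fun n => Eventually.of_forall fun x => by by_cases hx : x ∈ A n <;> simp [hx])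
    (Eventually.of_forall fun x => tendsto_const_nhds.congr' <| by
      filter_upwards [h_mem x] with n hn
      simp [hn])

theorem denseRange_mulL2ToL1 {ψ : Ω → ℝ} (hψ : MemLp ψ 2 μ) (hψ_meas : Measurable ψ)
    (hψ_pos : ∀ x, 0 < ψ x) : DenseRange (mulL2ToL1 (hψ.toLp ψ)) := by
  intro f
  have hf_meas : Measurable f := (Lp.stronglyMeasurable f).measurable
  -- on `A n` we have `|f / ψ| ≤ n ψ`, so the truncated quotient lies in `L²`
  set A : ℕ → Set Ω := fun n => {x | |f x| ≤ n * ψ x ^ 2}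
  have hA (n : ℕ) : MeasurableSet (A n) :=
    measurableSet_le hf_meas.abs (measurable_const.mul (hψ_meas.pow_const 2))
  have hφ (n : ℕ) : MemLp ((A n).indicator fun x => f x / ψ x) 2 μ := by
    refine (hψ.const_mul n).of_le ((hf_meas.div hψ_meas).indicator (hA n)).aestronglyMeasurable
      (Eventually.of_forall fun x => ?_)
    by_cases hx : x ∈ A n
    · have : |f x| / ψ x ≤ n * ψ x := by
        rw [div_le_iff₀ (hψ_pos x)]
        nlinarith [hx.out]
      simpa [hx, abs_div, abs_of_pos (hψ_pos x)] using this
    · simpa [hx] using by positivity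
  set T := mulL2ToL1 (hψ.toLp ψ)
  have hT (n : ℕ) : T ((hφ n).toLp _) =ᵐ[μ] (A n).indicator f := by
    filter_upwards [coeFn_mulL2ToL1 _ ((hφ n).toLp _), (hφ n).coeFn_toLp, hψ.coeFn_toLp]
      with x hx hφx hψx
    rw [hx, hφx, hψx]
    by_cases hxA : x ∈ A n
    · simp [hxA, div_mul_cancel₀ _ (hψ_pos x).ne']
    · simp [hxA]
  have h_eventually (x : Ω) : ∀ᶠ n : ℕ in atTop, x ∈ A n := by
    filter_upwards [tendsto_natCast_atTop_atTop.eventually_ge_atTop (|f x| / ψ x ^ 2)] with n hn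
    exact (div_le_iff₀ (pow_pos (hψ_pos x) 2)).1 hn
  refine mem_closure_of_tendsto (b := atTop) (f := fun n => T ((hφ n).toLp _))
    ?_ (Eventually.of_forall fun n => Set.mem_range_self _)
  rw [tendsto_iff_norm_sub_tendsto_zero]
  refine (tendsto_integral_norm_indicator_sub (L1.integrable_coeFn f) hA h_eventually).congr
    fun n => ?_
  rw [L1.norm_eq_integral_norm]
  refine integral_congr_ae ?_
  filter_upwards [Lp.coeFn_sub (T ((hφ n).toLp _)) f, hT n] with x h₁ h₂
  rw [h₁, Pi.sub_apply, h₂]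

theorem ae_abs_le_of_forall_abs_setIntegral_le {f g : Ω → ℝ} (hf : Integrable f μ)
    (hg : Integrable g μ)
    (h : ∀ s, MeasurableSet s → μ s < ∞ → |∫ x in s, f x ∂μ| ≤ ∫ x in s, g x ∂μ) :
    ∀ᵐ x ∂μ, |f x| ≤ g x := by
  have h_le := ae_le_of_forall_setIntegral_le hf hg fun s hs hμs =>
    (le_abs_self _).trans (h s hs hμs)
  have h_neg_le := ae_le_of_forall_setIntegral_le hf.neg hg fun s hs hμs => by
    simpa only [Pi.neg_apply, integral_neg] using (neg_le_abs _).trans (h s hs hμs)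
  filter_upwards [h_le, h_neg_le] with x h₁ h₂
  exact abs_le'.2 ⟨h₁, h₂⟩

theorem ae_abs_div_le_opNorm {ψ : Ω → ℝ} (hψ : MemLp ψ 2 μ) (hψ_pos : ∀ x, 0 < ψ x)
    (l : Lp ℝ 1 μ →L[ℝ] ℝ) (u : Lp ℝ 2 μ)
    (hu : ∀ φ : Lp ℝ 2 μ, ∫ x, φ x * u x ∂μ = l (mulL2ToL1 (hψ.toLp ψ) φ)) :
    ∀ᵐ x ∂μ, |u x / ψ x| ≤ ‖l‖ := by
  have hset (s : Set Ω) (hs : MeasurableSet s) :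
      |∫ x in s, u x * ψ x ∂μ| ≤ ∫ x in s, ‖l‖ * ψ x ^ 2 ∂μ := by
    set φ := (hψ.indicator hs).toLp (s.indicator ψ)
    have hφ : φ =ᵐ[μ] s.indicator ψ := (hψ.indicator hs).coeFn_toLp
    have h_left : ∫ x, φ x * u x ∂μ = ∫ x in s, u x * ψ x ∂μ := by
      rw [← integral_indicator hs]
      refine integral_congr_ae ?_
      filter_upwards [hφ] with x hx
      by_cases hxs : x ∈ s <;> simp [hx, hxs, mul_comm]
    have h_norm : ‖mulL2ToL1 (hψ.toLp ψ) φ‖ = ∫ x in s, ψ x ^ 2 ∂μ := by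
      rw [L1.norm_eq_integral_norm, ← integral_indicator hs]
      refine integral_congr_ae ?_
      filter_upwards [coeFn_mulL2ToL1 (hψ.toLp ψ) φ, hφ, hψ.coeFn_toLp] with x hT hφx hψx
      by_cases hxs : x ∈ s <;> simp [hT, hφx, hψx, hxs, sq]
    rw [← h_left, hu, integral_const_mul, ← h_norm, ← Real.norm_eq_abs]
    exact l.le_opNorm _
  filter_upwards [ae_abs_le_of_forall_abs_setIntegral_le ((Lp.memLp u).integrable_mul hψ)
    (hψ.integrable_sq.const_mul ‖l‖) fun s hs _ => hset s hs] with x hx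
  rw [Pi.mul_apply, abs_mul, abs_of_pos (hψ_pos x), sq, ← mul_assoc] at hx
  rw [abs_div, abs_of_pos (hψ_pos x), div_le_iff₀ (hψ_pos x)]
  exact le_of_mul_le_mul_right hx (hψ_pos x)

theorem exists_integral_mul_eq_of_L1_dual [SigmaFinite μ] (l : Lp ℝ 1 μ →L[ℝ] ℝ) :
    ∃ w : Ω → ℝ, Measurable w ∧ (∀ᵐ x ∂μ, |w x| ≤ ‖l‖) ∧
      ∀ f : Lp ℝ 1 μ, ∫ x, f x * w x ∂μ = l f := by
  obtain ⟨ψ, hψ_meas, hψ_pos, hψ⟩ := exists_pos_memLp_two μ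
  set T := mulL2ToL1 (hψ.toLp ψ)
  set u := (InnerProductSpace.toDual ℝ (Lp ℝ 2 μ)).symm (l ∘L T)
  have hu (φ : Lp ℝ 2 μ) : ∫ x, φ x * u x ∂μ = l (T φ) := by
    have := InnerProductSpace.toDual_symm_apply (x := φ) (y := l ∘L T)
    rw [L2.inner_def] at this
    simp only [RCLike.inner_apply, conj_trivial] at this
    exact this
  have hu_meas : Measurable u := (Lp.stronglyMeasurable u).measurable
  set w : Ω → ℝ := fun x => u x / ψ x
  have hw_bound : ∀ᵐ x ∂μ, |w x| ≤ ‖l‖ := ae_abs_div_le_opNorm hψ hψ_pos l u hu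
  have hw : MemLp w ∞ μ :=
    memLp_top_of_bound (hu_meas.div hψ_meas).aestronglyMeasurable _ hw_bound
  set P := ((ContinuousLinearMap.mul ℝ ℝ).lpPairing μ 1 ∞).flip (hw.toLp w)
  have hP (f : Lp ℝ 1 μ) : P f = ∫ x, f x * w x ∂μ := by
    rw [ContinuousLinearMap.flip_apply, ContinuousLinearMap.lpPairing_eq_integral]
    refine integral_congr_ae ?_
    filter_upwards [hw.coeFn_toLp] with x hx
    simp [hx]
  have hPT : P ∘ T = l ∘ T := funext fun φ => by
    simp only [Function.comp_apply, hP, ← hu]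
    refine integral_congr_ae ?_
    filter_upwards [coeFn_mulL2ToL1 (hψ.toLp ψ) φ, hψ.coeFn_toLp] with x hT hψx
    rw [hT, hψx, mul_assoc, mul_div_cancel₀ _ (hψ_pos x).ne']
  refine ⟨w, hu_meas.div hψ_meas, hw_bound, fun f => ?_⟩
  rw [← hP]
  exact congrFun
    ((denseRange_mulL2ToL1 hψ hψ_meas hψ_pos).equalizer P.continuous l.continuous hPT) f

theorem ae_nonneg_of_forall_integral_mul_nonneg [SigmaFinite μ] {w : Ω → ℝ} (hw : MemLp w ∞ μ)
    (h : ∀ f : Lp ℝ 1 μ, 0 ≤ᵐ[μ] f → 0 ≤ ∫ x, f x * w x ∂μ) : 0 ≤ᵐ[μ] w := by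
  refine ae_nonneg_of_forall_setIntegral_nonneg_of_sigmaFinite (fun s hs hμs => ?_)
    fun s hs hμs => ?_
  · have : Fact (μ s < ∞) := ⟨hμs⟩
    exact (hw.restrict s).integrable le_top
  · have h_ind : (indicatorConstLp 1 hs hμs.ne (1 : ℝ) : Ω → ℝ) =ᵐ[μ] s.indicator 1 :=
      indicatorConstLp_coeFn
    calc 0 ≤ ∫ x, indicatorConstLp 1 hs hμs.ne (1 : ℝ) x * w x ∂μ := h _ <| by
          filter_upwards [h_ind] with x hx
          rw [hx]
          exact Set.indicator_nonneg (fun _ _ => zero_le_one) x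
      _ = ∫ x, s.indicator w x ∂μ := integral_congr_ae <| by
          filter_upwards [h_ind] with x hx
          by_cases hxs : x ∈ s <;> simp [hx, hxs]
      _ = ∫ x in s, w x ∂μ := integral_indicator hs

end L1Duality

/-- Hahn–Banach / L¹–L∞ duality step of the unimodular Frostman lemma:
a subadditive, positively homogeneous functional `p` on `L¹(μ)` that is bounded
by `M ∫|f|` and vanishes on a.e.-nonpositive functions is dominated from below by
integration against some `w ∈ L∞` with `0 ≤ w ≤ M`, with equality at a given `h`. -/
theorem frostman_functional_representation
    {Ω : Type*} [MeasurableSpace Ω] (μ : Measure Ω) [SigmaFinite μ]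
    (M : ℝ) (hM : 0 ≤ M) (p : Lp ℝ 1 μ → ℝ)
    (hsub : ∀ f g : Lp ℝ 1 μ, p (f + g) ≤ p f + p g)
    (hhomog : ∀ (f : Lp ℝ 1 μ) (t : ℝ), 0 ≤ t → p (t • f) = t * p f)
    (hbound : ∀ f : Lp ℝ 1 μ, |p f| ≤ M * ∫ x, |f x| ∂μ)
    (hneg : ∀ f : Lp ℝ 1 μ, (∀ᵐ x ∂μ, f x ≤ 0) → p f = 0)
    (h : Lp ℝ 1 μ) :
    ∃ w : Ω → ℝ, Measurable w ∧ (∀ᵐ x ∂μ, 0 ≤ w x ∧ w x ≤ M) ∧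
      (∀ f : Lp ℝ 1 μ, ∫ x, f x * w x ∂μ ≤ p f) ∧ (∫ x, h x * w x ∂μ) = p h := by
  obtain ⟨l, hl_le, hl_h⟩ :=
    exists_linearMap_le_sublinear_eq p (fun c hc f => hhomog f c hc.le) hsub h
  have hp_le (f : Lp ℝ 1 μ) : p f ≤ M * ‖f‖ := by
    simpa [L1.norm_eq_integral_norm] using (le_abs_self _).trans (hbound f)
  have hl_bound (f : Lp ℝ 1 μ) : ‖l f‖ ≤ M * ‖f‖ := by
    have h_neg : -l f ≤ M * ‖f‖ := by
      simpa only [map_neg, norm_neg] using (hl_le (-f)).trans (hp_le (-f))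
    exact abs_le.2 ⟨by linarith, (hl_le f).trans (hp_le f)⟩
  have hl_nonneg (f : Lp ℝ 1 μ) (hf : 0 ≤ᵐ[μ] f) : 0 ≤ l f := by
    have hp : p (-f) = 0 := hneg (-f) <| by
      filter_upwards [Lp.coeFn_neg f, hf] with x hx hfx
      rw [hx, Pi.neg_apply]
      exact neg_nonpos.2 hfx
    linarith [map_neg l f ▸ hl_le (-f)]
  obtain ⟨w, hw_meas, hw_bound, hw_eq⟩ :=
    exists_integral_mul_eq_of_L1_dual (l.mkContinuous M hl_bound)
  have hw_nonneg : 0 ≤ᵐ[μ] w :=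
    ae_nonneg_of_forall_integral_mul_nonneg
      (memLp_top_of_bound hw_meas.aestronglyMeasurable _ hw_bound)
      fun f hf => (hw_eq f).symm ▸ hl_nonneg f hf
  refine ⟨w, hw_meas, ?_, fun f => (hw_eq f).trans_le (hl_le f), (hw_eq h).trans hl_h⟩
  filter_upwards [hw_nonneg, hw_bound] with x h₀ h₁
  exact ⟨h₀, (le_abs_self _).trans (h₁.trans (l.mkContinuous_norm_le hM hl_bound))⟩
end
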